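/- arXiv:2008.10982 — 8 statements merged into one kernel-verified Lean document; each statement's English description precedes it below -/
import Mathlib

section
/- For every threshold c > 0, the function x ↦ ρ_c(x)/x is concave on the open interval (0, ∞). -/
/-!
On `(0, c]` the function is `x / 2` and on `[c, ∞)` it is `c - c² / (2x)`. Both branches have
slope `1/2` at `c`, so it is differentiable on `(0, ∞)` with derivative `(c / max x c)² / 2`
(`1/2` up to `c`, then `c² / (2x²)`), which is nonincreasing; a function with nonincreasing
derivative is concave.
-/

noncomputable def huberLoss (c x : ℝ) : ℝ :=
  if |x| ≤ c then x ^ 2 / 2 else c * |x| - c ^ 2 / 2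

open Set Filter Topology

theorem hasDerivAt_of_eventuallyEq_Iic_Ici {f g h : ℝ → ℝ} {f' a : ℝ}
    (hg : HasDerivAt g f' a) (hh : HasDerivAt h f' a)
    (hfg : f =ᶠ[𝓝[≤] a] g) (hfh : f =ᶠ[𝓝[≥] a] h) : HasDerivAt f f' a := by
  have hl := hg.hasDerivWithinAt.congr_of_eventuallyEq hfg (hfg.eq_of_nhdsWithin self_mem_Iic)
  have hr := hh.hasDerivWithinAt.congr_of_eventuallyEq hfh (hfh.eq_of_nhdsWithin self_mem_Ici)
  simpa [Iic_union_Ici] using hl.union hr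

theorem ConcaveOn.of_hasDerivAt_antitoneOn {D : Set ℝ} (hD : Convex ℝ D) (hDo : IsOpen D)
    {f f' : ℝ → ℝ} (hf : ∀ x ∈ D, HasDerivAt f (f' x) x) (hf' : AntitoneOn f' D) :
    ConcaveOn ℝ D f := by
  refine AntitoneOn.concaveOn_of_deriv hD
    (fun x hx => (hf x hx).continuousAt.continuousWithinAt) ?_ ?_ <;> rw [hDo.interior_eq]
  · exact fun x hx => (hf x hx).differentiableAt.differentiableWithinAt
  · intro x hx y hy hxy
    rw [(hf x hx).deriv, (hf y hy).deriv]
    exact hf' hx hy hxy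

section
variable {c x : ℝ}

theorem huberLoss_of_abs_le (h : |x| ≤ c) : huberLoss c x = x ^ 2 / 2 := if_pos h

theorem huberLoss_of_le_abs (h : c ≤ |x|) : huberLoss c x = c * |x| - c ^ 2 / 2 := by
  rcases h.lt_or_eq with h | h
  · exact if_neg h.not_ge
  · rw [huberLoss_of_abs_le h.ge, ← sq_abs x, ← h]; ring

theorem huberLoss_div_self_of_le (hx : 0 < x) (hxc : x ≤ c) : huberLoss c x / x = x / 2 := by
  rw [huberLoss_of_abs_le (by rwa [abs_of_pos hx])]
  field_simp

theorem huberLoss_div_self_of_ge (hx : 0 < x) (hcx : c ≤ x) :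
    huberLoss c x / x = c - c ^ 2 / 2 * x⁻¹ := by
  rw [huberLoss_of_le_abs (by rwa [abs_of_pos hx]), abs_of_pos hx]
  field_simp

theorem hasDerivAt_huberLoss_div_self (hx : 0 < x) :
    HasDerivAt (fun y => huberLoss c y / y) ((c / max x c) ^ 2 / 2) x := by
  have hleft : HasDerivAt (fun y : ℝ => y / 2) (1 / 2) x := (hasDerivAt_id x).div_const 2
  have hright : HasDerivAt (fun y => c - c ^ 2 / 2 * y⁻¹) ((c / x) ^ 2 / 2) x := by
    refine (((hasDerivAt_inv hx.ne').const_mul (c ^ 2 / 2)).const_sub c).congr_deriv ?_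
    ring
  rcases lt_trichotomy x c with hxc | rfl | hcx
  · rw [max_eq_right hxc.le, div_self (hx.trans hxc).ne', one_pow]
    refine hleft.congr_of_eventuallyEq ?_
    filter_upwards [Ioo_mem_nhds hx hxc] with y hy
    exact huberLoss_div_self_of_le hy.1 hy.2.le
  · rw [max_self, div_self hx.ne', one_pow]
    refine hasDerivAt_of_eventuallyEq_Iic_Ici hleft (by simpa [hx.ne'] using hright) ?_ ?_
    · filter_upwards [self_mem_nhdsWithin, nhdsWithin_le_nhds (Ioi_mem_nhds hx)] with y hyx hy
      exact huberLoss_div_self_of_le hy hyx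
    · filter_upwards [self_mem_nhdsWithin] with y hy
      exact huberLoss_div_self_of_ge (hx.trans_le hy) hy
  · rw [max_eq_left hcx.le]
    refine hright.congr_of_eventuallyEq ?_
    filter_upwards [Ioi_mem_nhds hcx, Ioi_mem_nhds hx] with y hcy hy
    exact huberLoss_div_self_of_ge hy hcy.le

theorem antitone_sq_div_max (hc : 0 < c) : Antitone fun x : ℝ => (c / max x c) ^ 2 / 2 := by
  intro x y hxy
  have : 0 < max x c := lt_max_of_lt_right hc
  dsimp only
  gcongr

end

/-- For every threshold `c > 0`, the function `x ↦ ρ_c(x)/x` is concave on `(0, ∞)`. -/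
theorem huberLoss_div_concaveOn (c : ℝ) (hc : 0 < c) :
    ConcaveOn ℝ (Set.Ioi (0 : ℝ)) (fun x => huberLoss c x / x) :=
  ConcaveOn.of_hasDerivAt_antitoneOn (convex_Ioi 0) isOpen_Ioi
    (fun _ => hasDerivAt_huberLoss_div_self)
    ((antitone_sq_div_max hc).antitoneOn _)
end

section
/- For every N ≥ 1, p ≥ 1, y ∈ ℝ^N, X ∈ ℝ^{N×p}, α > 0 and c > 0, Huber's criterion L(β, σ) = Nασ + Σ_{i=1}^N ρ_c((y_i − x_iᵀβ)/σ)·σ is jointly convex on the set ℝ^p × (0, ∞), where x_iᵀ denotes the i-th row of X. -/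
/-! The Huber loss is the pointwise maximum of the parabola tangents `x ↦ s x - s² / 2`, `|s| ≤ c`,
hence convex. The perspective `(t, σ) ↦ σ ρ_c(t / σ)` of a convex function is jointly convex on
`σ > 0`, since `t / σ` is a convex combination of the `tₖ / σₖ` with weights proportional to the
`σₖ`. Precomposing with the affine maps `(β, σ) ↦ (yᵢ - xᵢᵀβ, σ)`, summing, and adding the linear
term `Nασ` preserves convexity. -/

open Set

section
variable {𝕜 E β ι : Type*} [Semiring 𝕜] [PartialOrder 𝕜] [AddCommMonoid E] [SMul 𝕜 E]
  [AddCommMonoid β] [PartialOrder β] [IsOrderedAddMonoid β]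

theorem ConvexOn.fun_sum [Module 𝕜 β] {s : Set E} (hs : Convex 𝕜 s) (t : Finset ι)
    {f : ι → E → β} (hf : ∀ i ∈ t, ConvexOn 𝕜 s (f i)) :
    ConvexOn 𝕜 s (fun x => ∑ i ∈ t, f i x) := by
  simpa only [← Finset.sum_apply] using
    Finset.sum_induction f (ConvexOn 𝕜 s) (fun _ _ => ConvexOn.add) (convexOn_const 0 hs) hf

theorem convexOn_of_forall_le_of_exists_eq [SMul 𝕜 β] [PosSMulMono 𝕜 β] {s : Set E}
    (hs : Convex 𝕜 s) {f : E → β} {g : ι → E → β} (hg : ∀ i, ConvexOn 𝕜 s (g i))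
    (hle : ∀ i, ∀ x ∈ s, g i x ≤ f x) (heq : ∀ x ∈ s, ∃ i, g i x = f x) :
    ConvexOn 𝕜 s f := by
  refine ⟨hs, fun x hx y hy a b ha hb hab => ?_⟩
  obtain ⟨i, hi⟩ := heq _ (hs hx hy ha hb hab)
  calc f (a • x + b • y) = g i (a • x + b • y) := hi.symm
    _ ≤ a • g i x + b • g i y := (hg i).2 hx hy ha hb hab
    _ ≤ a • f x + b • f y := by
      gcongr
      exacts [hle i x hx, hle i y hy]

end

theorem ConvexOn.perspective {E : Type*} [AddCommGroup E] [Module ℝ E] {f : E → ℝ}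
    (hf : ConvexOn ℝ univ f) :
    ConvexOn ℝ (univ ×ˢ Ioi 0) (fun q : E × ℝ => f (q.2⁻¹ • q.1) * q.2) := by
  refine ⟨convex_univ.prod (convex_Ioi 0), ?_⟩
  rintro ⟨t₁, σ₁⟩ ⟨-, hσ₁ : 0 < σ₁⟩ ⟨t₂, σ₂⟩ ⟨-, hσ₂ : 0 < σ₂⟩ a b ha hb hab
  simp only [Prod.smul_mk, Prod.mk_add_mk, smul_eq_mul]
  set σ := a * σ₁ + b * σ₂
  have hσ : 0 < σ := convex_Ioi (0 : ℝ) hσ₁ hσ₂ ha hb hab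
  have hcombo : σ⁻¹ • (a • t₁ + b • t₂)
      = (a * σ₁ / σ) • (σ₁⁻¹ • t₁) + (b * σ₂ / σ) • (σ₂⁻¹ • t₂) := by
    simp only [smul_smul, smul_add]
    congr 2 <;> field_simp
  have hweights : a * σ₁ / σ + b * σ₂ / σ = 1 := by rw [← add_div, div_self hσ.ne']
  have hjensen := hf.2 (mem_univ (σ₁⁻¹ • t₁)) (mem_univ (σ₂⁻¹ • t₂)) (by positivity) (by positivity)
    hweights
  rw [← hcombo, smul_eq_mul, smul_eq_mul] at hjensen
  calc f (σ⁻¹ • (a • t₁ + b • t₂)) * σ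
      ≤ (a * σ₁ / σ * f (σ₁⁻¹ • t₁) + b * σ₂ / σ * f (σ₂⁻¹ • t₂)) * σ := by gcongr
    _ = a * (f (σ₁⁻¹ • t₁) * σ₁) + b * (f (σ₂⁻¹ • t₂) * σ₂) := by field_simp

theorem mul_sub_sq_div_two_le_huberLoss {c s : ℝ} (hs : |s| ≤ c) (x : ℝ) :
    s * x - s ^ 2 / 2 ≤ huberLoss c x := by
  unfold huberLoss
  split_ifs with hx
  · nlinarith [sq_nonneg (x - s)]
  · have hsx : s * x ≤ |s| * |x| := (le_abs_self _).trans_eq (abs_mul s x)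
    nlinarith [sq_abs s, abs_nonneg s, mul_nonneg (sub_nonneg.2 hs) (sub_nonneg.2 (not_le.1 hx).le)]

theorem exists_huberLoss_eq {c : ℝ} (hc : 0 ≤ c) (x : ℝ) :
    ∃ s, |s| ≤ c ∧ huberLoss c x = s * x - s ^ 2 / 2 := by
  unfold huberLoss
  split_ifs with hx
  · exact ⟨x, hx, by ring⟩
  · rcases le_or_gt 0 x with hx₀ | hx₀
    · exact ⟨c, (abs_of_nonneg hc).le, by rw [abs_of_nonneg hx₀]⟩
    · exact ⟨-c, by rw [abs_neg, abs_of_nonneg hc], by rw [abs_of_neg hx₀]; ring⟩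

theorem convexOn_huberLoss {c : ℝ} (hc : 0 ≤ c) : ConvexOn ℝ univ (huberLoss c) := by
  refine convexOn_of_forall_le_of_exists_eq convex_univ
    (g := fun s : {s : ℝ // |s| ≤ c} => fun x => s * x - s ^ 2 / 2)
    (fun s => ?_) (fun s x _ => mul_sub_sq_div_two_le_huberLoss s.2 x)
    (fun x _ => ?_)
  · exact ((LinearMap.mulLeft ℝ (s : ℝ)).convexOn convex_univ).sub (concaveOn_const _ convex_univ)
  · obtain ⟨s, hs, heq⟩ := exists_huberLoss_eq hc x
    exact ⟨⟨s, hs⟩, heq.symm⟩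

theorem huberCriterion_convexOn_general (N p : ℕ)
    (y : Fin N → ℝ) (X : Matrix (Fin N) (Fin p) ℝ) (α c : ℝ) (hc : 0 < c) :
    ConvexOn ℝ ((Set.univ : Set (Fin p → ℝ)) ×ˢ Set.Ioi (0 : ℝ))
      (fun q : (Fin p → ℝ) × ℝ =>
        (N : ℝ) * α * q.2 +
          ∑ i, huberLoss c ((y i - ∑ j, X i j * q.1 j) / q.2) * q.2) := by
  have hS : Convex ℝ ((univ : Set (Fin p → ℝ)) ×ˢ Ioi (0 : ℝ)) := convex_univ.prod (convex_Ioi 0)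
  refine ConvexOn.add ((((N : ℝ) * α) • LinearMap.snd ℝ (Fin p → ℝ) ℝ).convexOn hS)
    (ConvexOn.fun_sum hS _ fun i _ => ?_)
  let residual : (Fin p → ℝ) →ᵃ[ℝ] ℝ :=
    AffineMap.const ℝ _ (y i) - ((LinearMap.proj i).comp X.mulVecLin).toAffineMap
  have h : ConvexOn ℝ (univ ×ˢ Ioi 0)
      (fun q : (Fin p → ℝ) × ℝ => huberLoss c (q.2⁻¹ • residual q.1) * q.2) :=
    (convexOn_huberLoss hc.le).perspective.comp_affineMap (residual.prodMap (AffineMap.id ℝ ℝ))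
  simpa [residual, Matrix.mulVec, dotProduct, div_eq_inv_mul] using h

/-- Huber's criterion `L(β, σ) = Nασ + Σᵢ ρ_c((yᵢ − xᵢᵀβ)/σ)·σ` is jointly convex
on `ℝᵖ × (0, ∞)`. -/
theorem huberCriterion_convexOn (N p : ℕ) (hN : 1 ≤ N) (hp : 1 ≤ p)
    (y : Fin N → ℝ) (X : Matrix (Fin N) (Fin p) ℝ) (α c : ℝ) (hα : 0 < α) (hc : 0 < c) :
    ConvexOn ℝ ((Set.univ : Set (Fin p → ℝ)) ×ˢ Set.Ioi (0 : ℝ))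
      (fun q : (Fin p → ℝ) × ℝ =>
        (N : ℝ) * α * q.2 +
          ∑ i, huberLoss c ((y i - ∑ j, X i j * q.1 j) / q.2) * q.2) :=
  huberCriterion_convexOn_general N p y X α c hc
end

section
/- For every threshold c > 0, every N ≥ 1 and every residual vector r ∈ ℝ^N, the maximum-likelihood scale criterion σ ↦ N·ln(σ) + Σ_{i=1}^N ρ_c(r_i/σ) is NOT a convex function on (0, ∞). -/
open Real Set

theorem not_convexOn_Ici_of_abs_sub_mul_log_le {f : ℝ → ℝ} {a C N : ℝ} (hN : 0 < N)
    (hlog : ∀ x ≥ a, |f x - N * log x| ≤ C) : ¬ ConvexOn ℝ (Ici a) f := by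
  intro hf
  set b := max a 1
  have hb : b ∈ Ici a := le_max_left a 1
  have hb1 : 1 ≤ b := le_max_right a 1
  obtain ⟨y, hy_log, hby⟩ := ((tendsto_log_atTop.eventually_gt_atTop
    ((f b + 3 * C) / N + 2 * log 2)).and (Filter.eventually_ge_atTop b)).exists
  have hy : y ∈ Ici a := hb.trans hby
  have hmid : f ((b + y) / 2) ≤ (f b + f y) / 2 := by
    have := hf.2 hb hy one_half_pos.le one_half_pos.le (add_halves 1)
    simp only [smul_eq_mul] at this
    rw [show (b + y) / 2 = 1 / 2 * b + 1 / 2 * y by ring]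
    linarith
  have hlog_mid : log y - log 2 ≤ log ((b + y) / 2) := by
    rw [← log_div (by linarith) two_ne_zero]
    exact log_le_log (by linarith) (by linarith)
  have hf_mid := (abs_le.1 (hlog ((b + y) / 2) (by simp only [mem_Ici] at hb; linarith))).1
  have hf_y := (abs_le.1 (hlog y hy)).2
  have hN_log : N * (log y - log 2) ≤ N * log ((b + y) / 2) :=
    mul_le_mul_of_nonneg_left hlog_mid hN.le
  rw [div_add' _ _ _ hN.ne', div_lt_iff₀ hN] at hy_log
  linarith

theorem abs_huberLoss_le (c x : ℝ) : |huberLoss c x| ≤ x ^ 2 / 2 + c ^ 2 := by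
  unfold huberLoss
  split_ifs
  · rw [abs_of_nonneg (by positivity)]
    nlinarith
  · rw [abs_le]
    constructor <;> nlinarith [abs_nonneg x, sq_abs x, sq_nonneg (|x| - c), sq_nonneg (|x| + c)]

theorem abs_sum_huberLoss_div_le {ι : Type*} [Fintype ι] (c : ℝ) (r : ι → ℝ) {σ : ℝ}
    (hσ : 1 ≤ σ) : |∑ i, huberLoss c (r i / σ)| ≤ ∑ i, (r i ^ 2 / 2 + c ^ 2) := by
  refine (Finset.abs_sum_le_sum_abs _ _).trans (Finset.sum_le_sum fun i _ => ?_)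
  have hsq : (r i / σ) ^ 2 ≤ r i ^ 2 := by
    rw [div_pow]
    exact div_le_self (sq_nonneg _) (one_le_pow₀ hσ)
  linarith [abs_huberLoss_le c (r i / σ)]

theorem mlScaleCriterion_not_convexOn_general (c : ℝ) (N : ℕ) (hN : 1 ≤ N)
    (r : Fin N → ℝ) :
    ¬ ConvexOn ℝ (Set.Ioi (0 : ℝ))
        (fun σ : ℝ => (N : ℝ) * Real.log σ + ∑ i, huberLoss c (r i / σ)) := by
  intro hconv
  have hN_pos : (0 : ℝ) < N := by exact_mod_cast hN
  refine not_convexOn_Ici_of_abs_sub_mul_log_le (a := 1) (C := ∑ i, (r i ^ 2 / 2 + c ^ 2))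
    hN_pos (fun σ hσ => ?_) (hconv.subset (Ici_subset_Ioi.2 one_pos) (convex_Ici 1))
  simpa only [add_sub_cancel_left] using abs_sum_huberLoss_div_le c r hσ

/-- For every `c > 0`, `N ≥ 1` and residual vector `r`, the maximum-likelihood scale
criterion `σ ↦ N·ln σ + Σᵢ ρ_c(rᵢ/σ)` is not convex on `(0, ∞)`. -/
theorem mlScaleCriterion_not_convexOn (c : ℝ) (hc : 0 < c) (N : ℕ) (hN : 1 ≤ N)
    (r : Fin N → ℝ) :
    ¬ ConvexOn ℝ (Set.Ioi (0 : ℝ))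
        (fun σ : ℝ => (N : ℝ) * Real.log σ + ∑ i, huberLoss c (r i / σ)) :=
  mlScaleCriterion_not_convexOn_general c N hN r
end

section
/- Fix β ∈ ℝ^p, data y ∈ ℝ^N, X ∈ ℝ^{N×p}, α > 0 and c > 0, and let r_i = y_i − x_iᵀβ. Then σ ↦ L(β, σ) is differentiable on (0, ∞) and its derivative at every σ > 0 equals Nα − Σ_{i=1}^N χ_c(r_i/σ). -/
/-- Huber's score function with threshold `c`. -/
noncomputable def huberScore (c x : ℝ) : ℝ :=
  if |x| ≤ c then x else c * Real.sign x

/-- `χ_c(x) = ψ_c(x)·x − ρ_c(x)`. -/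
noncomputable def huberChi (c x : ℝ) : ℝ := huberScore c x * x - huberLoss c x

theorem hasDerivAt_max_zero_sq_div_two (t : ℝ) :
    HasDerivAt (fun u : ℝ => max u 0 ^ 2 / 2) (max t 0) t := by
  refine hasDerivAt_of_hasDerivAt_of_ne' (f := fun u : ℝ => max u 0 ^ 2 / 2)
    (g := fun u => max u 0) (x := 0) (fun y hy => ?_) (by fun_prop) (by fun_prop) t
  rcases hy.lt_or_gt with hy | hy
  · have hloc : (fun u : ℝ => max u 0 ^ 2 / 2) =ᶠ[nhds y] fun _ => 0 := by
      filter_upwards [eventually_lt_nhds hy] with u hu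
      simp [max_eq_right hu.le]
    rw [max_eq_right hy.le]
    exact (hasDerivAt_const y (0 : ℝ)).congr_of_eventuallyEq hloc
  · have hloc : (fun u : ℝ => max u 0 ^ 2 / 2) =ᶠ[nhds y] fun u => u ^ 2 / 2 := by
      filter_upwards [eventually_gt_nhds hy] with u hu
      rw [max_eq_left hu.le]
    rw [max_eq_left hy.le]
    refine HasDerivAt.congr_of_eventuallyEq ?_ hloc
    simpa using (hasDerivAt_pow 2 y).div_const 2

section Huber

variable {c : ℝ}

theorem huberLoss_eq_sub_hinges (hc : 0 ≤ c) (x : ℝ) :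
    huberLoss c x = x ^ 2 / 2 - max (x - c) 0 ^ 2 / 2 - max (-x - c) 0 ^ 2 / 2 := by
  unfold huberLoss
  split_ifs with h
  · rw [abs_le] at h
    rw [max_eq_right (by linarith), max_eq_right (by linarith)]
    ring
  · rcases le_or_gt 0 x with hx | hx
    · rw [abs_of_nonneg hx] at h ⊢
      rw [max_eq_left (by linarith), max_eq_right (by linarith)]
      ring
    · rw [abs_of_neg hx] at h ⊢
      rw [max_eq_right (by linarith), max_eq_left (by linarith)]
      ring

theorem huberScore_eq_sub_hinges (hc : 0 ≤ c) (x : ℝ) :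
    huberScore c x = x - max (x - c) 0 + max (-x - c) 0 := by
  unfold huberScore
  split_ifs with h
  · rw [abs_le] at h
    rw [max_eq_right (by linarith), max_eq_right (by linarith)]
    ring
  · rcases le_or_gt 0 x with hx | hx
    · rw [abs_of_nonneg hx] at h
      rw [max_eq_left (by linarith), max_eq_right (by linarith), Real.sign_of_pos (by linarith)]
      ring
    · rw [abs_of_neg hx] at h
      rw [max_eq_right (by linarith), max_eq_left (by linarith), Real.sign_of_neg hx]
      ring

theorem hasDerivAt_huberLoss (hc : 0 ≤ c) (x : ℝ) :
    HasDerivAt (huberLoss c) (huberScore c x) x := by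
  have hsq : HasDerivAt (fun u : ℝ => u ^ 2 / 2) x x := by
    simpa using (hasDerivAt_pow 2 x).div_const 2
  have hright := (hasDerivAt_max_zero_sq_div_two (x - c)).comp x ((hasDerivAt_id x).sub_const c)
  have hleft := (hasDerivAt_max_zero_sq_div_two (-x - c)).comp x ((hasDerivAt_neg x).sub_const c)
  rw [funext (huberLoss_eq_sub_hinges hc), huberScore_eq_sub_hinges hc]
  refine ((hsq.fun_sub hright).fun_sub hleft).congr_deriv ?_
  simp only [mul_one, mul_neg_one, sub_neg_eq_add]

end Huber

theorem HasDerivAt.comp_div_mul {f : ℝ → ℝ} {f' r σ : ℝ} (hf : HasDerivAt f f' (r / σ))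
    (hσ : σ ≠ 0) : HasDerivAt (fun s => f (r / s) * s) (f (r / σ) - f' * (r / σ)) σ := by
  have hdiv : HasDerivAt (fun s => r / s) (-(r / σ ^ 2)) σ := by
    simpa [div_eq_mul_inv] using (hasDerivAt_inv hσ).const_mul r
  refine ((hf.comp σ hdiv).fun_mul (hasDerivAt_id' σ)).congr_deriv ?_
  simp only [Function.comp_apply]
  field_simp
  ring

theorem huberCriterion_hasDerivAt_scale_general (N p : ℕ) (y : Fin N → ℝ)
    (X : Matrix (Fin N) (Fin p) ℝ) (β : Fin p → ℝ) (α c : ℝ) (hc : 0 < c) :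
    ∀ σ : ℝ, 0 < σ →
      HasDerivAt
        (fun s : ℝ =>
          (N : ℝ) * α * s + ∑ i, huberLoss c ((y i - ∑ j, X i j * β j) / s) * s)
        ((N : ℝ) * α - ∑ i, huberChi c ((y i - ∑ j, X i j * β j) / σ)) σ := by
  intro σ hσ
  have hterm (r : ℝ) :
      HasDerivAt (fun s => huberLoss c (r / s) * s) (-huberChi c (r / σ)) σ := by
    convert (hasDerivAt_huberLoss hc.le (r / σ)).comp_div_mul hσ.ne' using 1
    rw [huberChi]
    ring
  have hsum := HasDerivAt.fun_sum (u := Finset.univ) fun i _ => hterm (y i - ∑ j, X i j * β j)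
  refine (((hasDerivAt_id' σ).const_mul ((N : ℝ) * α)).fun_add hsum).congr_deriv ?_
  simp [sub_eq_add_neg]

/-- For fixed `β`, the map `σ ↦ L(β, σ)` is differentiable on `(0, ∞)` and its
derivative at every `σ > 0` equals `Nα − Σᵢ χ_c(rᵢ/σ)` where `rᵢ = yᵢ − xᵢᵀβ`. -/
theorem huberCriterion_hasDerivAt_scale (N p : ℕ) (y : Fin N → ℝ)
    (X : Matrix (Fin N) (Fin p) ℝ) (β : Fin p → ℝ) (α c : ℝ) (hα : 0 < α) (hc : 0 < c) :
    ∀ σ : ℝ, 0 < σ →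
      HasDerivAt
        (fun s : ℝ =>
          (N : ℝ) * α * s + ∑ i, huberLoss c ((y i - ∑ j, X i j * β j) / s) * s)
        ((N : ℝ) * α - ∑ i, huberChi c ((y i - ∑ j, X i j * β j) / σ)) σ :=
  huberCriterion_hasDerivAt_scale_general N p y X β α c hc
end

section
/- Let c > 0 and let Z be a standard normal random variable (law N(0,1) on ℝ). Then E[χ_c(Z)] = (c²/2)·(1 − F_{χ²₁}(c²)) + (1/2)·F_{χ²₃}(c²), where F_{χ²ₖ} denotes the cumulative distribution function of the chi-squared distribution with k degrees of freedom, i.e., of the Gamma distribution with shape k/2 and rate 1/2. -/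
open MeasureTheory ProbabilityTheory

/-- The CDF of the chi-squared distribution with `k` degrees of freedom, i.e. of the
Gamma distribution with shape `k/2` and rate `1/2`. -/
noncomputable def chiSqCDF (k : ℕ) : ℝ → ℝ :=
  fun x => cdf (gammaMeasure ((k : ℝ) / 2) (1 / 2)) x

/-! `χ_c(x) = min(x², c²)/2` depends on `x` only through `x²`, and the square of a standard
Gaussian has the `χ²₁ = Γ(1/2, 1/2)` law. Hence `E[χ_c(Z)] = (1/2) E[Y; Y ≤ c²] + (c²/2) P(Y > c²)`
for `Y ~ χ²₁`, and the truncated mean is a `χ²₃` probability because Gamma densities satisfy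
`y f_{a,r}(y) = (a/r) f_{a+1,r}(y)`. -/

open Set Real

lemma huberChi_eq_min_sq {c : ℝ} (hc : 0 ≤ c) (x : ℝ) :
    huberChi c x = min (x ^ 2) (c ^ 2) / 2 := by
  rw [huberChi, huberScore, huberLoss]
  split_ifs with hx
  · rw [min_eq_left (sq_le_sq' (abs_le.1 hx).1 (abs_le.1 hx).2)]
    ring
  · have h_sign : Real.sign x * x = |x| := by
      rcases lt_trichotomy x 0 with h | rfl | h
      · rw [sign_of_neg h, abs_of_neg h, neg_one_mul]
      · simp
      · rw [sign_of_pos h, abs_of_pos h, one_mul]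
    have h_cx : c ^ 2 ≤ x ^ 2 := sq_le_sq.2 (by rw [abs_of_nonneg hc]; exact (not_le.1 hx).le)
    rw [min_eq_right h_cx, mul_assoc, h_sign]
    ring

namespace ProbabilityTheory

lemma mul_gammaPDFReal {a r : ℝ} (ha : 0 < a) (hr : 0 < r) (x : ℝ) :
    x * gammaPDFReal a r x = a / r * gammaPDFReal (a + 1) r x := by
  unfold gammaPDFReal
  split_ifs with hx
  · rw [rpow_add_one hr.ne', Gamma_add_one ha.ne', add_sub_cancel_right,
      show x ^ a = x ^ (a - 1) * x from by
        rw [← rpow_add_one' hx (by simpa using ha.ne'), sub_add_cancel]]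
    have := (Gamma_pos_of_pos ha).ne'
    field_simp
  · simp

lemma setIntegral_gammaMeasure_eq_setIntegral_smul {E : Type*} [NormedAddCommGroup E]
    [NormedSpace ℝ E] {a r : ℝ} (ha : 0 < a) (hr : 0 < r) {s : Set ℝ} (hs : MeasurableSet s)
    (f : ℝ → E) :
    ∫ x in s, f x ∂gammaMeasure a r = ∫ x in s, gammaPDFReal a r x • f x := by
  rw [gammaMeasure, setIntegral_withDensity_eq_setIntegral_toReal_smul (f := gammaPDF a r)
    (measurable_gammaPDFReal a r).ennreal_ofReal (ae_of_all _ fun _ ↦ ENNReal.ofReal_lt_top) f hs]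
  simp_rw [gammaPDF, ENNReal.toReal_ofReal (gammaPDFReal_nonneg ha hr _)]

lemma integral_gammaMeasure_eq_integral_smul {E : Type*} [NormedAddCommGroup E]
    [NormedSpace ℝ E] {a r : ℝ} (ha : 0 < a) (hr : 0 < r) (f : ℝ → E) :
    ∫ x, f x ∂gammaMeasure a r = ∫ x, gammaPDFReal a r x • f x := by
  simpa using setIntegral_gammaMeasure_eq_setIntegral_smul ha hr MeasurableSet.univ f

lemma setIntegral_Iic_id_gammaMeasure {a r : ℝ} (ha : 0 < a) (hr : 0 < r) (x : ℝ) :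
    ∫ y in Iic x, y ∂gammaMeasure a r = a / r * cdf (gammaMeasure (a + 1) r) x := by
  rw [setIntegral_gammaMeasure_eq_setIntegral_smul ha hr measurableSet_Iic]
  simp_rw [smul_eq_mul, mul_comm (gammaPDFReal a r _) _, mul_gammaPDFReal ha hr]
  rw [integral_const_mul, cdf_gammaMeasure_eq_integral (by linarith) hr]

lemma mul_gammaPDFReal_half_sq {x : ℝ} (hx : 0 < x) :
    x * gammaPDFReal (1 / 2) (1 / 2) (x ^ 2) = gaussianPDFReal 0 1 x := by
  have h_rate : (1 / 2 : ℝ) ^ (1 / 2 : ℝ) = (√2)⁻¹ := by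
    rw [← sqrt_eq_rpow, one_div, sqrt_inv]
  have h_pow : (x ^ 2) ^ (1 / 2 - 1 : ℝ) = x⁻¹ := by
    rw [← rpow_natCast, ← rpow_mul hx.le]
    norm_num [rpow_neg_one]
  rw [gammaPDFReal, if_pos (sq_nonneg x), h_rate, h_pow, Gamma_one_half_eq, gaussianPDFReal,
    NNReal.coe_one, mul_one, sqrt_mul zero_le_two]
  field_simp
  ring_nf

lemma integral_gaussianReal_comp_sq (g : ℝ → ℝ) :
    ∫ x, g (x ^ 2) ∂gaussianReal 0 1 = ∫ y, g y ∂gammaMeasure (1 / 2) (1 / 2) := by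
  have h_even : ∀ x, gaussianPDFReal 0 1 |x| = gaussianPDFReal 0 1 x := fun x ↦ by
    simp [gaussianPDFReal]
  calc ∫ x, g (x ^ 2) ∂gaussianReal 0 1
      = ∫ x, gaussianPDFReal 0 1 |x| • g (|x| ^ 2) := by
        simp_rw [integral_gaussianReal_eq_integral_smul one_ne_zero, h_even, sq_abs]
    _ = 2 * ∫ x in Ioi 0, gaussianPDFReal 0 1 x • g (x ^ 2) :=
        integral_comp_abs (f := fun x ↦ gaussianPDFReal 0 1 x • g (x ^ 2))
    _ = ∫ x in Ioi 0,
          (2 * x ^ (2 - 1 : ℝ)) • (gammaPDFReal (1 / 2) (1 / 2) • g) (x ^ (2 : ℝ)) := by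
        rw [← integral_const_mul]
        refine setIntegral_congr_fun measurableSet_Ioi fun x hx ↦ ?_
        rw [← mul_gammaPDFReal_half_sq hx, rpow_two]
        norm_num
        ring
    _ = ∫ y in Ioi 0, gammaPDFReal (1 / 2) (1 / 2) y • g y :=
        integral_comp_rpow_Ioi_of_pos two_pos
    _ = ∫ y, g y ∂gammaMeasure (1 / 2) (1 / 2) := by
        rw [integral_gammaMeasure_eq_integral_smul (by norm_num) (by norm_num),
          ← integral_Ici_eq_integral_Ioi]
        refine setIntegral_eq_integral_of_forall_compl_eq_zero fun y hy ↦ ?_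
        simp [gammaPDFReal, not_le.2 (notMem_Ici.1 hy)]

lemma gaussianReal_map_sq :
    (gaussianReal 0 1).map (· ^ 2) = gammaMeasure (1 / 2) (1 / 2) := by
  have := isProbabilityMeasure_gammaMeasure (a := 1 / 2) (r := 1 / 2) (by norm_num) (by norm_num)
  ext s hs
  rw [← ENNReal.toReal_eq_toReal_iff' (measure_ne_top _ _) (measure_ne_top _ _)]
  calc ((gaussianReal 0 1).map (· ^ 2)).real s
      = ∫ x, s.indicator 1 (x ^ 2) ∂gaussianReal 0 1 := by
        rw [map_measureReal_apply (by fun_prop) hs,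
          ← integral_indicator_one (hs.preimage (by fun_prop))]
        rfl
    _ = (gammaMeasure (1 / 2) (1 / 2)).real s := by
        rw [integral_gaussianReal_comp_sq, integral_indicator_one hs]

end ProbabilityTheory

/-- For a standard normal `Z`, `E[χ_c(Z)] = (c²/2)(1 − F_{χ²₁}(c²)) + (1/2)F_{χ²₃}(c²)`. -/
theorem integral_huberChi_gaussian (c : ℝ) (hc : 0 < c) :
    ∫ x, huberChi c x ∂(gaussianReal 0 1) =
      c ^ 2 / 2 * (1 - chiSqCDF 1 (c ^ 2)) + 1 / 2 * chiSqCDF 3 (c ^ 2) := by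
  set γ := gammaMeasure (1 / 2) (1 / 2)
  have : IsProbabilityMeasure γ := isProbabilityMeasure_gammaMeasure (by norm_num) (by norm_num)
  have h_law : (gaussianReal 0 1).map (· ^ 2) = γ := gaussianReal_map_sq
  set h : ℝ → ℝ := fun y ↦ min y (c ^ 2) / 2
  have h_meas : Measurable h := by fun_prop
  have hχ : huberChi c = h ∘ (· ^ 2) := funext (huberChi_eq_min_sq hc.le)
  have h_int : Integrable h γ := by
    rw [← h_law, integrable_map_measure h_meas.aestronglyMeasurable (by fun_prop), ← hχ]
    refine Integrable.of_bound (by rw [hχ]; fun_prop) (c ^ 2 / 2) (ae_of_all _ fun x ↦ ?_)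
    rw [huberChi_eq_min_sq hc.le, norm_of_nonneg (by positivity)]
    exact div_le_div_of_nonneg_right (min_le_right _ _) zero_le_two
  calc ∫ x, huberChi c x ∂gaussianReal 0 1 = ∫ y, h y ∂γ := by
        rw [← h_law, integral_map (by fun_prop) h_meas.aestronglyMeasurable, hχ]
        rfl
    _ = ∫ y in Iic (c ^ 2), y / 2 ∂γ + ∫ y in Ioi (c ^ 2), c ^ 2 / 2 ∂γ := by
        rw [← integral_add_compl measurableSet_Iic h_int, compl_Iic]
        congr 1
        · exact setIntegral_congr_fun measurableSet_Iic fun y hy ↦ by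
            simp [h, min_eq_left (mem_Iic.1 hy)]
        · exact setIntegral_congr_fun measurableSet_Ioi fun y hy ↦ by
            simp [h, min_eq_right (mem_Ioi.1 hy).le]
    _ = _ := by
        rw [integral_div, setIntegral_Iic_id_gammaMeasure (by norm_num) (by norm_num),
          setIntegral_const, ← compl_Iic, measureReal_compl measurableSet_Iic, ← cdf_eq_real]
        norm_num [chiSqCDF, γ]
        ring
end

section
/- For every threshold c > 0 and all x, u ∈ ℝ, the Huber loss admits the quadratic majorization ρ_c(u) ≤ ρ_c(x) + ψ_c(x)·(u − x) + (1/2)·(u − x)², with equality when u = x. -/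
/-!
The Huber loss is the Moreau envelope of `c |·|`: `ρ_c(u) = min_v (c |v| + (u - v)² / 2)`,
and for a given `x` the minimum is attained at `v = x - ψ_c(x)` (soft thresholding).
Bounding `ρ_c(u)` by the value of the envelope's objective at the minimizer for `x` and
expanding `(u - x + ψ_c(x))²` gives the majorization.
-/

theorem huberLoss_le_mul_abs_add_sq (c u v : ℝ) :
    huberLoss c u ≤ c * |v| + (u - v) ^ 2 / 2 := by
  unfold huberLoss
  split_ifs with hu
  · have : u * v ≤ c * |v| :=
      (le_abs_self _).trans (by rw [abs_mul]; exact mul_le_mul_of_nonneg_right hu (abs_nonneg v))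
    nlinarith [sq_nonneg v]
  · have hdiff : c * (|u| - |v|) ≤ |c| * |u - v| := by
      calc c * (|u| - |v|) ≤ |c| * |(|u| - |v|)| := by rw [← abs_mul]; exact le_abs_self _
        _ ≤ |c| * |u - v| := mul_le_mul_of_nonneg_left (abs_abs_sub_abs_le_abs_sub u v) (abs_nonneg c)
    nlinarith [sq_nonneg (|c| - |u - v|), sq_abs c, sq_abs (u - v)]

theorem huberLoss_eq_mul_abs_sub_huberScore_add_sq {c : ℝ} (hc : 0 ≤ c) (x : ℝ) :
    huberLoss c x = c * |x - huberScore c x| + huberScore c x ^ 2 / 2 := by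
  unfold huberLoss huberScore
  split_ifs with hx
  · simp
  · rcases lt_trichotomy x 0 with hneg | hzero | hpos
    · rw [Real.sign_of_neg hneg, abs_of_neg hneg, abs_of_neg (by linarith [abs_of_neg hneg])]
      ring
    · simp_all
    · rw [Real.sign_of_pos hpos, abs_of_pos hpos, abs_of_pos (by linarith [abs_of_pos hpos])]
      ring

/-- Quadratic majorization of the Huber loss:
`ρ_c(u) ≤ ρ_c(x) + ψ_c(x)(u − x) + (u − x)²/2`, with equality at `u = x`. -/
theorem huberLoss_quadratic_majorization (c : ℝ) (hc : 0 < c) :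
    (∀ x u : ℝ,
      huberLoss c u ≤
        huberLoss c x + huberScore c x * (u - x) + 1 / 2 * (u - x) ^ 2) ∧
    (∀ x : ℝ,
      huberLoss c x =
        huberLoss c x + huberScore c x * (x - x) + 1 / 2 * (x - x) ^ 2) := by
  refine ⟨fun x u => ?_, fun x => by ring⟩
  calc huberLoss c u ≤ c * |x - huberScore c x| + (u - (x - huberScore c x)) ^ 2 / 2 :=
        huberLoss_le_mul_abs_add_sq c u _
    _ = huberLoss c x + huberScore c x * (u - x) + 1 / 2 * (u - x) ^ 2 := by
        rw [huberLoss_eq_mul_abs_sub_huberScore_add_sq hc.le]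
        ring
end

section
/- For every threshold c > 0, every r ∈ ℝ and all σ, σ' > 0, the scale surrogate majorization holds: ρ_c(r/σ)·σ ≤ ρ_c(r/σ')·σ' + χ_c(r/σ')·((σ')²/σ − σ'), with equality when σ = σ'. -/
/-!
With `w = 1/σ`, the map `w ↦ ρ_c(r w)/w` is `r² w/2` while `|r| w ≤ c` and `c|r| − c²/(2w)` beyond,
a concave function with slope `χ_c(r w)/w²`. The right-hand side is its tangent line at `w = 1/σ'`.
-/

theorem Real.sign_mul_self_eq_abs (x : ℝ) : Real.sign x * x = |x| := by
  rcases lt_trichotomy x 0 with hx | rfl | hx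
  · rw [Real.sign_of_neg hx, abs_of_neg hx, neg_one_mul]
  · simp
  · rw [Real.sign_of_pos hx, abs_of_pos hx, one_mul]

theorem abs_div_le_iff_of_pos {r c σ : ℝ} (hσ : 0 < σ) : |r / σ| ≤ c ↔ |r| ≤ c * σ := by
  rw [abs_div, abs_of_pos hσ, div_le_iff₀ hσ]

theorem huberChi_eq (c x : ℝ) : huberChi c x = if |x| ≤ c then x ^ 2 / 2 else c ^ 2 / 2 := by
  unfold huberChi huberScore huberLoss
  split_ifs
  · ring
  · rw [mul_assoc, Real.sign_mul_self_eq_abs]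
    ring

theorem huberLoss_div_mul {c σ : ℝ} (r : ℝ) (hσ : 0 < σ) :
    huberLoss c (r / σ) * σ =
      if |r| ≤ c * σ then r ^ 2 / (2 * σ) else c * |r| - c ^ 2 * σ / 2 := by
  simp only [huberLoss, abs_div_le_iff_of_pos hσ]
  split_ifs
  · field_simp
  · rw [abs_div, abs_of_pos hσ]
    field_simp

theorem huberChi_div {c σ : ℝ} (r : ℝ) (hσ : 0 < σ) :
    huberChi c (r / σ) = if |r| ≤ c * σ then r ^ 2 / (2 * σ ^ 2) else c ^ 2 / 2 := by
  simp only [huberChi_eq, abs_div_le_iff_of_pos hσ]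
  split_ifs
  · field_simp
  · rfl

theorem huberLoss_div_mul_le {c σ σ' : ℝ} (r : ℝ) (hσ : 0 < σ) (hσ' : 0 < σ') :
    huberLoss c (r / σ) * σ ≤
      huberLoss c (r / σ') * σ' + huberChi c (r / σ') * (σ' ^ 2 / σ - σ') := by
  rw [huberLoss_div_mul r hσ, huberLoss_div_mul r hσ', huberChi_div r hσ']
  have hsq : r ^ 2 = |r| ^ 2 := (sq_abs r).symm
  rw [← sub_nonneg]
  split_ifs with hσ'c hσc
  · refine le_of_eq ?_
    field_simp
    ring
  · convert (by positivity : 0 ≤ (|r| - c * σ) ^ 2 / (2 * σ)) using 1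
    field_simp
    rw [hsq]
    ring
  · have hpos : 0 ≤ (|r| - c * σ') * (2 * c * σ - |r| - c * σ') / (2 * σ) :=
      div_nonneg (mul_nonneg (by linarith [not_le.1 hσ'c]) (by linarith [not_le.1 hσ'c])) (by positivity)
    convert hpos using 1
    field_simp
    rw [hsq]
    ring
  · convert (by positivity : 0 ≤ c ^ 2 * (σ - σ') ^ 2 / (2 * σ)) using 1
    field_simp
    ring

theorem huberLoss_scale_majorization_general (c : ℝ) (r : ℝ) :
    (∀ σ σ' : ℝ, 0 < σ → 0 < σ' →
      huberLoss c (r / σ) * σ ≤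
        huberLoss c (r / σ') * σ' + huberChi c (r / σ') * (σ' ^ 2 / σ - σ')) ∧
    (∀ σ' : ℝ, 0 < σ' →
      huberLoss c (r / σ') * σ' =
        huberLoss c (r / σ') * σ' + huberChi c (r / σ') * (σ' ^ 2 / σ' - σ')) :=
  ⟨fun _ _ hσ hσ' => huberLoss_div_mul_le r hσ hσ', fun σ' _ => by
    rw [sq, mul_self_div_self, sub_self, mul_zero, add_zero]⟩

/-- Scale surrogate majorization:
`ρ_c(r/σ)·σ ≤ ρ_c(r/σ')·σ' + χ_c(r/σ')·((σ')²/σ − σ')`, with equality at `σ = σ'`. -/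
theorem huberLoss_scale_majorization (c : ℝ) (hc : 0 < c) (r : ℝ) :
    (∀ σ σ' : ℝ, 0 < σ → 0 < σ' →
      huberLoss c (r / σ) * σ ≤
        huberLoss c (r / σ') * σ' + huberChi c (r / σ') * (σ' ^ 2 / σ - σ')) ∧
    (∀ σ' : ℝ, 0 < σ' →
      huberLoss c (r / σ') * σ' =
        huberLoss c (r / σ') * σ' + huberChi c (r / σ') * (σ' ^ 2 / σ' - σ')) :=
  huberLoss_scale_majorization_general c r
end

section
/- (Theorem 1, regression update) Let c > 0, σ > 0, y ∈ ℝ^N, X ∈ ℝ^{N×p} with XᵀX invertible, and β' ∈ ℝ^p. Set r' = y − Xβ' and the pseudo-residual r'_ψ = ψ_c(r'/σ)·σ (entrywise). Then the quadratic surrogate g₁(β) = Σ_{i=1}^N ( (r'_{ψ,i} − r'_i)·r_i + (1/2)·r_i² ) / σ, where r = y − Xβ, has the unique global minimizer β* = β' + (XᵀX)⁻¹Xᵀ r'_ψ over β ∈ ℝ^p. -/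
/-!
Completing the square, `a r + r²/2 = ((r + a)² − a²)/2`, turns the surrogate `g₁` into an
increasing affine function of the least-squares objective `‖z − Xβ‖²` with working response
`z = y + (r'_ψ − r') = Xβ' + r'_ψ`. Its minimizers are those of least squares, and by the normal
equations `‖z − Xβ‖² = ‖z − Xβ̂‖² + ‖X(β − β̂)‖²` with `β̂ = (XᵀX)⁻¹Xᵀz = β' + (XᵀX)⁻¹Xᵀ r'_ψ`;
since `X` is injective when `XᵀX` is invertible, `β̂` is the only minimizer.
-/

open Matrix Set

theorem StrictMono.isMinOn_comp_iff {α β γ : Type*} [LinearOrder β] [Preorder γ] {f : α → β}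
    {g : β → γ} (hg : StrictMono g) {s : Set α} {a : α} :
    IsMinOn (g ∘ f) s a ↔ IsMinOn f s a := by
  simp only [isMinOn_iff, Function.comp, hg.le_iff_le]

theorem sum_mul_add_half_sq_div_eq {m K : Type*} [Fintype m] [Field K] [NeZero (2 : K)]
    (a r : m → K) (σ : K) :
    ∑ i, (a i * r i + 1 / 2 * r i ^ 2) / σ = ((r + a) ⬝ᵥ (r + a) - a ⬝ᵥ a) / (2 * σ) := by
  simp only [dotProduct, ← Finset.sum_sub_distrib, Finset.sum_div, Pi.add_apply]
  refine Finset.sum_congr rfl fun i _ => ?_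
  field_simp
  ring

namespace Matrix

variable {m n R : Type*} [Fintype m] [Fintype n] [DecidableEq n]

section CommRing

variable [CommRing R] {X : Matrix m n R}

noncomputable def leastSquaresSolution (X : Matrix m n R) (z : m → R) : n → R :=
  (Xᵀ * X)⁻¹ *ᵥ (Xᵀ *ᵥ z)

theorem mulVec_injective_of_isUnit_det_transpose_mul (hX : IsUnit (Xᵀ * X).det) :
    Function.Injective X.mulVec := by
  refine Function.LeftInverse.injective (g := ((Xᵀ * X)⁻¹ * Xᵀ).mulVec) fun v => ?_
  rw [mulVec_mulVec, Matrix.mul_assoc, nonsing_inv_mul _ hX, one_mulVec]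

theorem leastSquaresSolution_mulVec_add (hX : IsUnit (Xᵀ * X).det) (b : n → R) (z : m → R) :
    leastSquaresSolution X (X *ᵥ b + z) = b + leastSquaresSolution X z := by
  rw [leastSquaresSolution, leastSquaresSolution, mulVec_add, mulVec_add, mulVec_mulVec b Xᵀ,
    mulVec_mulVec b, nonsing_inv_mul _ hX, one_mulVec]

theorem transpose_mulVec_sub_mulVec_leastSquaresSolution (hX : IsUnit (Xᵀ * X).det)
    (z : m → R) : Xᵀ *ᵥ (z - X *ᵥ leastSquaresSolution X z) = 0 := by
  rw [leastSquaresSolution, mulVec_sub, mulVec_mulVec, mulVec_mulVec, mul_nonsing_inv _ hX,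
    one_mulVec, sub_self]

theorem sub_mulVec_dotProduct_self_eq_add (hX : IsUnit (Xᵀ * X).det) (z : m → R) (β : n → R) :
    (z - X *ᵥ β) ⬝ᵥ (z - X *ᵥ β) =
      (z - X *ᵥ leastSquaresSolution X z) ⬝ᵥ (z - X *ᵥ leastSquaresSolution X z) +
        (X *ᵥ (β - leastSquaresSolution X z)) ⬝ᵥ (X *ᵥ (β - leastSquaresSolution X z)) := by
  have hsplit : z - X *ᵥ β =
      (z - X *ᵥ leastSquaresSolution X z) - X *ᵥ (β - leastSquaresSolution X z) := by
    rw [mulVec_sub]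
    abel
  have horth :
      (z - X *ᵥ leastSquaresSolution X z) ⬝ᵥ X *ᵥ (β - leastSquaresSolution X z) = 0 := by
    rw [dotProduct_mulVec, ← mulVec_transpose,
      transpose_mulVec_sub_mulVec_leastSquaresSolution hX, zero_dotProduct]
  generalize z - X *ᵥ leastSquaresSolution X z = e at hsplit horth ⊢
  generalize X *ᵥ (β - leastSquaresSolution X z) = v at hsplit horth ⊢
  rw [hsplit, sub_dotProduct, dotProduct_sub, dotProduct_sub, dotProduct_comm v e, horth]
  ring

end CommRing

theorem isMinOn_sub_mulVec_dotProduct_self_iff [CommRing R] [LinearOrder R]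
    [IsStrictOrderedRing R] {X : Matrix m n R} (hX : IsUnit (Xᵀ * X).det) (z : m → R)
    (β : n → R) :
    IsMinOn (fun β => (z - X *ᵥ β) ⬝ᵥ (z - X *ᵥ β)) univ β ↔ β = leastSquaresSolution X z := by
  have hnonneg (v : m → R) : 0 ≤ v ⬝ᵥ v := Finset.sum_nonneg fun i _ => mul_self_nonneg (v i)
  rw [isMinOn_univ_iff]
  constructor
  · intro hmin
    have hzero := hmin (leastSquaresSolution X z)
    rw [sub_mulVec_dotProduct_self_eq_add hX z β, add_le_iff_nonpos_right] at hzero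
    have hXβ := dotProduct_self_eq_zero.mp (le_antisymm hzero (hnonneg _))
    rw [mulVec_sub, sub_eq_zero] at hXβ
    exact mulVec_injective_of_isUnit_det_transpose_mul hX hXβ
  · rintro rfl γ
    rw [sub_mulVec_dotProduct_self_eq_add hX z γ]
    exact le_add_of_nonneg_right (hnonneg _)

end Matrix

theorem huberRegressionSurrogate_unique_minimizer_general (c σ : ℝ) (hσ : 0 < σ)
    (N p : ℕ) (y : Fin N → ℝ) (X : Matrix (Fin N) (Fin p) ℝ)
    (hX : IsUnit (X.transpose * X).det) (β' : Fin p → ℝ) :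
    let r' : Fin N → ℝ := y - X.mulVec β'
    let rψ' : Fin N → ℝ := fun i => huberScore c (r' i / σ) * σ
    let g₁ : (Fin p → ℝ) → ℝ := fun β =>
      ∑ i, ((rψ' i - r' i) * (y i - X.mulVec β i) + 1 / 2 * (y i - X.mulVec β i) ^ 2) / σ
    let βstar : Fin p → ℝ := β' + (X.transpose * X)⁻¹.mulVec (X.transpose.mulVec rψ')
    IsMinOn g₁ Set.univ βstar ∧ ∀ β : Fin p → ℝ, IsMinOn g₁ Set.univ β → β = βstar := by
  intro r' rψ' g₁ βstar
  set a := rψ' - r'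
  set z := X *ᵥ β' + rψ'
  have hz (β : Fin p → ℝ) : y - X *ᵥ β + a = z - X *ᵥ β := by
    simp only [a, z, r']
    abel
  have hg :
      g₁ = (fun t => (t - a ⬝ᵥ a) / (2 * σ)) ∘ fun β => (z - X *ᵥ β) ⬝ᵥ (z - X *ᵥ β) := by
    funext β
    rw [Function.comp_apply, ← hz]
    exact sum_mul_add_half_sq_div_eq a (y - X *ᵥ β) σ
  have hmono : StrictMono fun t : ℝ => (t - a ⬝ᵥ a) / (2 * σ) := fun _ _ h =>
    div_lt_div_of_pos_right (sub_lt_sub_right h _) (by positivity)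
  have hβstar : βstar = leastSquaresSolution X z :=
    (leastSquaresSolution_mulVec_add hX β' rψ').symm
  have hmin (β : Fin p → ℝ) : IsMinOn g₁ univ β ↔ β = βstar := by
    rw [hg, hmono.isMinOn_comp_iff, isMinOn_sub_mulVec_dotProduct_self_iff hX, hβstar]
  exact ⟨(hmin βstar).2 rfl, fun β => (hmin β).1⟩

/-- (Theorem 1, regression update) The quadratic surrogate
`g₁(β) = Σᵢ ((r'_{ψ,i} − r'ᵢ)·rᵢ + (1/2)rᵢ²)/σ`, with `r = y − Xβ`, has the unique
global minimizer `β* = β' + (XᵀX)⁻¹Xᵀ r'_ψ`, where `r' = y − Xβ'` and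
`r'_ψ = ψ_c(r'/σ)·σ` entrywise. -/
theorem huberRegressionSurrogate_unique_minimizer (c σ : ℝ) (hc : 0 < c) (hσ : 0 < σ)
    (N p : ℕ) (y : Fin N → ℝ) (X : Matrix (Fin N) (Fin p) ℝ)
    (hX : IsUnit (X.transpose * X).det) (β' : Fin p → ℝ) :
    let r' : Fin N → ℝ := y - X.mulVec β'
    let rψ' : Fin N → ℝ := fun i => huberScore c (r' i / σ) * σ
    let g₁ : (Fin p → ℝ) → ℝ := fun β =>
      ∑ i, ((rψ' i - r' i) * (y i - X.mulVec β i) + 1 / 2 * (y i - X.mulVec β i) ^ 2) / σ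
    let βstar : Fin p → ℝ := β' + (X.transpose * X)⁻¹.mulVec (X.transpose.mulVec rψ')
    IsMinOn g₁ Set.univ βstar ∧ ∀ β : Fin p → ℝ, IsMinOn g₁ Set.univ β → β = βstar :=
  huberRegressionSurrogate_unique_minimizer_general c σ hσ N p y X hX β'
end
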